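/- Let ω be an admissible penalty and β ∈ ℝ^P. Then the infimum of Σ_{j=1}^P (ω(|m_j|) + θ_j²) over all m, θ ∈ ℝ^P satisfying m_j θ_j = β_j for every j equals Σ_{j=1}^P ω̃(|β_j|). (Diagonal feature transformations yield the coordinate-wise effective penalty, a sparsity-type regularizer.) -/

import Mathlib

open Matrix Set

noncomputable section

/-- An admissible penalty: nonnegative, minimized at `ω 1 = 0`, strictly decreasing on `(0,1]`
and strictly increasing on `[1,∞)`. -/
def Admissible (ω : ℝ → ℝ) : Prop :=
  (∀ x, 0 ≤ ω x) ∧ ω 1 = 0 ∧ StrictAntiOn ω (Set.Ioc 0 1) ∧ StrictMonoOn ω (Set.Ici 1)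

/-- The scalar effective penalty `ω̃ v = inf_{z ≥ 1} (ω z + v² / z²)`. -/
def effPenalty (ω : ℝ → ℝ) (v : ℝ) : ℝ :=
  sInf ((fun z => ω z + v ^ 2 / z ^ 2) '' Set.Ici (1 : ℝ))

/-- The joint penalty `(ω₁ ⊕ ω₂) v = inf_{1 ≤ z ≤ v} (ω₁ z + ω₂ (v / z))`. -/
def jointPenalty (ω₁ ω₂ : ℝ → ℝ) (v : ℝ) : ℝ :=
  sInf ((fun z => ω₁ z + ω₂ (v / z)) '' Set.Icc (1 : ℝ) v)

/-- The (unordered) singular values of a real `P × Q` matrix: square roots of the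
eigenvalues of `Xᴴ X`. -/
def svals {P Q : ℕ} (X : Matrix (Fin P) (Fin Q) ℝ) (j : Fin Q) : ℝ :=
  Real.sqrt ((Matrix.isHermitian_conjTranspose_mul_self X).eigenvalues j)

/-- Singular values sorted in decreasing order: `svalsDesc X j` is the `j`-th largest
singular value of `X`. -/
def svalsDesc {P Q : ℕ} (X : Matrix (Fin P) (Fin Q) ℝ) (j : Fin Q) : ℝ :=
  svals X (Tuple.sort (fun i => - svals X i) j)

/-- The spectral penalty `Ω_ω M = Σ_j ω (σ_j M)`. -/
def specPenalty (ω : ℝ → ℝ) {P : ℕ} (M : Matrix (Fin P) (Fin P) ℝ) : ℝ :=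
  ∑ j, ω (svals M j)

/-- Frobenius norm squared. -/
def frobSq {P Q : ℕ} (X : Matrix (Fin P) (Fin Q) ℝ) : ℝ :=
  ∑ i, ∑ j, X i j ^ 2

/-- Euclidean norm of a vector. -/
def enorm2 {P : ℕ} (v : Fin P → ℝ) : ℝ :=
  Real.sqrt (∑ j, v j ^ 2)

/-- The induced effective spectral penalty `Ω̃_g B = Σ_{j=1}^{min(P,Q)} g̃(σ_j B)`. -/
def effSpec (g : ℝ → ℝ) {P Q : ℕ} (B : Matrix (Fin P) (Fin Q) ℝ) : ℝ :=
  ∑ j : Fin (min P Q), effPenalty g (svalsDesc B (Fin.castLE (min_le_right P Q) j))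

/-
The constraints `m j * θ j = β j` decouple, so the infimum of the sum is the sum of the scalar
infima `inf {ω |m| + θ² : m θ = b}`. In the scalar problem one may take `|m| ≥ 1`: when `|m| < 1`,
replacing `(m, θ)` by `(1, mθ)` does not increase the cost since `ω 1 = 0 ≤ ω |m|` and
`(mθ)² ≤ θ²`. With `z = |m| ≥ 1` the cost is `ω z + b² / z²`, which is the effective penalty.
-/

open scoped Pointwise

section FinsetSum

variable {ι M : Type*} (t : Finset ι) {s : ι → Set M}

lemma Set.Nonempty.finsetSum [AddCommMonoid M] (h : ∀ i ∈ t, (s i).Nonempty) :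
    (∑ i ∈ t, s i).Nonempty := by
  classical
  induction t using Finset.induction_on with
  | empty => exact zero_nonempty
  | insert i t hi ih =>
    rw [Finset.sum_insert hi]
    exact (h i (t.mem_insert_self i)).add (ih fun j hj => h j (Finset.mem_insert_of_mem hj))

lemma BddBelow.finsetSum [AddCommMonoid M] [PartialOrder M] [IsOrderedAddMonoid M]
    (h : ∀ i ∈ t, BddBelow (s i)) : BddBelow (∑ i ∈ t, s i) := by
  classical
  induction t using Finset.induction_on with
  | empty => exact bddBelow_singleton
  | insert i t hi ih =>
    rw [Finset.sum_insert hi]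
    exact (h i (t.mem_insert_self i)).add (ih fun j hj => h j (Finset.mem_insert_of_mem hj))

lemma csInf_finsetSum [ConditionallyCompleteLattice M] [AddCommGroup M] [IsOrderedAddMonoid M]
    (hne : ∀ i ∈ t, (s i).Nonempty) (hbdd : ∀ i ∈ t, BddBelow (s i)) :
    sInf (∑ i ∈ t, s i) = ∑ i ∈ t, sInf (s i) := by
  classical
  induction t using Finset.induction_on with
  | empty => exact csInf_zero
  | insert i t hi ih =>
    have hne' : ∀ j ∈ t, (s j).Nonempty := fun j hj => hne j (Finset.mem_insert_of_mem hj)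
    have hbdd' : ∀ j ∈ t, BddBelow (s j) := fun j hj => hbdd j (Finset.mem_insert_of_mem hj)
    rw [Finset.sum_insert hi, Finset.sum_insert hi, csInf_add (hne i (t.mem_insert_self i))
      (hbdd i (t.mem_insert_self i)) (.finsetSum t hne') (.finsetSum t hbdd'), ih hne' hbdd']

end FinsetSum

def factorizationCosts (ω : ℝ → ℝ) (b : ℝ) : Set ℝ :=
  {t | ∃ m θ : ℝ, m * θ = b ∧ t = ω |m| + θ ^ 2}

lemma factorizationCosts_nonempty (ω : ℝ → ℝ) (b : ℝ) : (factorizationCosts ω b).Nonempty :=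
  ⟨_, 1, b, one_mul b, rfl⟩

lemma bddBelow_factorizationCosts {ω : ℝ → ℝ} (h0 : ∀ x, 0 ≤ ω x) (b : ℝ) :
    BddBelow (factorizationCosts ω b) :=
  ⟨0, by rintro _ ⟨m, θ, -, rfl⟩; exact add_nonneg (h0 _) (sq_nonneg θ)⟩

lemma effPenalty_le {ω : ℝ → ℝ} (h0 : ∀ x, 0 ≤ ω x) (v : ℝ) {z : ℝ} (hz : 1 ≤ z) :
    effPenalty ω v ≤ ω z + v ^ 2 / z ^ 2 := by
  refine csInf_le ⟨0, ?_⟩ ⟨z, hz, rfl⟩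
  rintro _ ⟨y, -, rfl⟩
  exact add_nonneg (h0 y) (by positivity)

lemma image_subset_factorizationCosts (ω : ℝ → ℝ) (b : ℝ) :
    (fun z => ω z + |b| ^ 2 / z ^ 2) '' Ici 1 ⊆ factorizationCosts ω b := by
  rintro _ ⟨z, hz, rfl⟩
  have hz : 0 < z := zero_lt_one.trans_le hz
  refine ⟨z, b / z, mul_div_cancel₀ b hz.ne', ?_⟩
  rw [abs_of_pos hz, sq_abs, div_pow]

lemma exists_cost_le_of_mem_factorizationCosts {ω : ℝ → ℝ} (h0 : ∀ x, 0 ≤ ω x) (h1 : ω 1 = 0)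
    {b t : ℝ} (ht : t ∈ factorizationCosts ω b) : ∃ z ≥ 1, ω z + |b| ^ 2 / z ^ 2 ≤ t := by
  obtain ⟨m, θ, rfl, rfl⟩ := ht
  rcases le_or_gt 1 |m| with hm | hm
  · have hm0 : m ≠ 0 := abs_pos.mp (zero_lt_one.trans_le hm)
    refine ⟨|m|, hm, le_of_eq ?_⟩
    rw [sq_abs, sq_abs, mul_pow, mul_div_cancel_left₀ _ (pow_ne_zero 2 hm0)]
  · refine ⟨1, le_rfl, ?_⟩
    have hm2 : m ^ 2 ≤ 1 := by nlinarith [sq_abs m, abs_nonneg m]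
    rw [h1, sq_abs, one_pow, div_one, mul_pow]
    nlinarith [h0 |m|, sq_nonneg θ]

theorem sInf_factorizationCosts {ω : ℝ → ℝ} (h0 : ∀ x, 0 ≤ ω x) (h1 : ω 1 = 0) (b : ℝ) :
    sInf (factorizationCosts ω b) = effPenalty ω |b| := by
  apply le_antisymm
  · exact csInf_le_csInf (bddBelow_factorizationCosts h0 b) ⟨_, 1, self_mem_Ici, rfl⟩
      (image_subset_factorizationCosts ω b)
  · refine le_csInf (factorizationCosts_nonempty ω b) fun t ht => ?_
    obtain ⟨z, hz, hzt⟩ := exists_cost_le_of_mem_factorizationCosts h0 h1 ht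
    exact (effPenalty_le h0 |b| hz).trans hzt

lemma sum_factorizationCosts {ι : Type*} [Fintype ι] (ω : ℝ → ℝ) (β : ι → ℝ) :
    ∑ j, factorizationCosts ω (β j) =
      {t : ℝ | ∃ m θ : ι → ℝ, (∀ j, m j * θ j = β j) ∧ t = ∑ j, (ω |m j| + θ j ^ 2)} := by
  ext t
  rw [Set.mem_fintype_sum]
  constructor
  · rintro ⟨g, hg, rfl⟩
    choose m θ hmθ hg using hg
    exact ⟨m, θ, hmθ, Finset.sum_congr rfl fun j _ => hg j⟩
  · rintro ⟨m, θ, hmθ, rfl⟩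
    exact ⟨fun j => ω |m j| + θ j ^ 2, fun j => ⟨m j, θ j, hmθ j, rfl⟩, rfl⟩

/-- With diagonal feature transformations, the joint optimization yields the
coordinate-wise effective penalty `Σ_j ω̃(|β_j|)`. -/
theorem diagonal_effective_penalty {P : ℕ} (ω : ℝ → ℝ) (hω : Admissible ω) (β : Fin P → ℝ) :
    sInf {t : ℝ | ∃ m θ : Fin P → ℝ, (∀ j, m j * θ j = β j) ∧
        t = ∑ j, (ω |m j| + θ j ^ 2)} =
      ∑ j, effPenalty ω |β j| := by
  obtain ⟨h0, h1, -⟩ := hω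
  rw [← sum_factorizationCosts, csInf_finsetSum _ (fun j _ => factorizationCosts_nonempty ω (β j))
    (fun j _ => bddBelow_factorizationCosts h0 (β j))]
  exact Finset.sum_congr rfl fun j _ => sInf_factorizationCosts h0 h1 (β j)
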